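/- Let G be a countable group, H ≤ G a subgroup such that the pair (G,H) is inner amenable, and let m be an H-conjugation-invariant mean on G. Let F be a finite collection of nonamenable subgroups of H. Then m({g ∈ G : L ∩ C_G(g) is nonamenable for all L ∈ F}) = 1. -/

import Mathlib

open Pointwise

/-- A mean on `X`: a finitely additive probability measure defined on all subsets of `X`. -/
structure Mean (X : Type*) where
  m : Set X → ℝ
  nonneg : ∀ A : Set X, 0 ≤ m A
  total : m Set.univ = 1
  fin_add : ∀ A B : Set X, Disjoint A B → m (A ∪ B) = m A + m B

/-- A mean on a `G`-set `X` is invariant if it is preserved by the action of every `g ∈ G`. -/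
def MeanInvariant (G : Type*) [Group G] {X : Type*} [MulAction G X] (m : Mean X) : Prop :=
  ∀ (g : G) (A : Set X), m.m ((fun x => g • x) '' A) = m.m A

/-- The action of `G` on `X` is amenable: there is a `G`-invariant mean on `X`. -/
def AmenableAction (G : Type*) [Group G] (X : Type*) [MulAction G X] : Prop :=
  ∃ m : Mean X, MeanInvariant G m

/-- A group is amenable if its left translation action on itself admits an invariant mean. -/
def AmenableGroup (G : Type*) [Group G] : Prop :=
  ∃ m : Mean G, ∀ (g : G) (A : Set G), m.m ((fun x => g * x) '' A) = m.m A

/-- `H` is `L`-q-normal in `M` if `{g ∈ M : gHg⁻¹ ∩ H ∈ L}` generates `M`. -/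
def IsLQNormal {G : Type*} [Group G] (L : Subgroup G → Prop) (H M : Subgroup G) : Prop :=
  H ≤ M ∧
    Subgroup.closure
      {g : G | g ∈ M ∧ L (Subgroup.map (MulAut.conj g).toMonoidHom H ⊓ H)} = M

/-- `H` is `L`-wq-normal in `M`: there is an increasing ordinal-indexed chain from `H` to `M`
whose unions of initial segments are `L`-q-normal at every stage. -/
def IsLWQNormal {G : Type*} [Group G] (L : Subgroup G → Prop) (H M : Subgroup G) : Prop :=
  ∃ (lam : Ordinal.{0}) (c : Ordinal.{0} → Subgroup G),
    (∀ α β : Ordinal.{0}, α ≤ β → β ≤ lam → c α ≤ c β) ∧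
    c 0 = H ∧ c lam = M ∧
    ∀ α : Ordinal.{0}, 0 < α → α ≤ lam →
      IsLQNormal L (⨆ (β : Ordinal.{0}) (_ : β < α), c β) (c α)

/-- q*-normality: `{g ∈ M : gHg⁻¹ ∩ H nonamenable}` generates `M`. -/
def IsQStarNormal {G : Type*} [Group G] (H M : Subgroup G) : Prop :=
  IsLQNormal (fun K => ¬ AmenableGroup ↥K) H M

/-- wq*-normality. -/
def IsWQStarNormal {G : Type*} [Group G] (H M : Subgroup G) : Prop :=
  IsLWQNormal (fun K => ¬ AmenableGroup ↥K) H M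

/-- q-normality: `{g ∈ M : gHg⁻¹ ∩ H infinite}` generates `M`. -/
def IsQNormal {G : Type*} [Group G] (H M : Subgroup G) : Prop :=
  IsLQNormal (fun K => ((K : Set G)).Infinite) H M

/-- wq-normality. -/
def IsWQNormal {G : Type*} [Group G] (H M : Subgroup G) : Prop :=
  IsLWQNormal (fun K => ((K : Set G)).Infinite) H M

/-- `n`-degree `L`-wq-normality in `G`: `L₀ = L`, `L_{n+1} = {H : H is Lₙ-wq-normal in G}`. -/
def NDegLWQNormal {G : Type*} [Group G] (L : Subgroup G → Prop) : ℕ → Subgroup G → Prop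
  | 0, H => L H
  | n + 1, H => IsLWQNormal (NDegLWQNormal L n) H ⊤

/-- The isoperimetric constant `φ_S(X)` of a `G`-set `X` with respect to a finite `S ⊆ G`. -/
noncomputable def phiConst {G : Type*} [Group G] (S : Finset G) (X : Type*) [MulAction G X] :
    ℝ :=
  sInf {r : ℝ | ∃ P : Finset X, P.Nonempty ∧
    r = (∑ s ∈ S, (((s • (P : Set X)) \ (P : Set X)).ncard : ℝ)) / (P.card : ℝ)}


/-- The pair `(G,H)` is inner amenable: there is an atomless mean on `G` invariant under
conjugation by elements of `H`. -/
def PairInnerAmenable {G : Type*} [Group G] (H : Subgroup G) : Prop :=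
  ∃ m : Mean G, (∀ g : G, m.m {g} = 0) ∧
    ∀ h ∈ H, ∀ A : Set G, m.m ((fun x => h * x * h⁻¹) '' A) = m.m A

/-!
Each `L ∈ F` acts on `G` by conjugation, preserving `m`, and the stabilizer of `g` is
`L ⊓ C_G(g)`. The set `B` of points with amenable stabilizer is invariant, so if `m B > 0`,
normalizing `m` on `B` gives an invariant mean for an action of `L` all of whose stabilizers
are amenable. Averaging over it the stabilizer-invariant means, transported along the orbits,
produces an invariant mean on `L`; hence `m B = 0` when `L` is nonamenable, and a finite union
of null sets is null.

The averaging uses an integral of `[0, 1]`-valued functions against a finitely additive mean,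
the limit of the lower sums `(1/n) ∑ᵢ m {f ≥ i/n}`. These are additive up to `1/n` because
`⌊n f⌋ + ⌊n g⌋ ≤ ⌊n (f + g)⌋ ≤ ⌊n f⌋ + ⌊n g⌋ + 1`, and the layer-cake integral of `ℕ`-valued
functions is exactly additive.
-/

open MulAction Finset

namespace Nat

variable {a b : ℝ}

theorem floor_add_floor_le (ha : 0 ≤ a) (hb : 0 ≤ b) : ⌊a⌋₊ + ⌊b⌋₊ ≤ ⌊a + b⌋₊ :=
  le_floor (by push_cast; linarith [floor_le ha, floor_le hb])

theorem floor_add_le_floor_add_floor_add_one (ha : 0 ≤ a) (hb : 0 ≤ b) :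
    ⌊a + b⌋₊ ≤ ⌊a⌋₊ + ⌊b⌋₊ + 1 :=
  le_of_lt_succ <| (floor_lt (by positivity)).2 <| by
    push_cast; linarith [lt_floor_add_one a, lt_floor_add_one b]

theorem mul_floor_le_floor_mul (ha : 0 ≤ a) (k : ℕ) : k * ⌊a⌋₊ ≤ ⌊k * a⌋₊ :=
  le_floor (by push_cast; exact mul_le_mul_of_nonneg_left (floor_le ha) k.cast_nonneg)

theorem floor_mul_le_mul_floor_add (ha : 0 ≤ a) (k : ℕ) : ⌊k * a⌋₊ ≤ k * ⌊a⌋₊ + k := by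
  rcases k.eq_zero_or_pos with rfl | hk
  · simp
  refine ((floor_lt (by positivity)).2 ?_).le
  push_cast
  nlinarith [lt_floor_add_one a, (cast_pos.2 hk : (0 : ℝ) < k)]

end Nat

open Filter Topology in
theorem le_of_forall_le_add_div_nat {a b c : ℝ} (h : ∀ n : ℕ, 0 < n → a ≤ b + c / n) : a ≤ b :=
  ge_of_tendsto (by simpa using tendsto_const_nhds.add (tendsto_const_div_atTop_nhds_zero_nat c))
    (eventually_atTop.2 ⟨1, h⟩)

namespace Mean

variable {X : Type*} (m : Mean X) {f g : X → ℝ}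

theorem m_empty : m.m ∅ = 0 := by
  have h := m.fin_add ∅ ∅ disjoint_bot_left
  rw [Set.union_empty] at h
  linarith

theorem m_mono {A B : Set X} (h : A ⊆ B) : m.m A ≤ m.m B := by
  have h2 := m.fin_add A (B \ A) Set.disjoint_sdiff_right
  rw [Set.union_sdiff_cancel h] at h2
  linarith [m.nonneg (B \ A)]

theorem m_le_one (A : Set X) : m.m A ≤ 1 :=
  m.total ▸ m.m_mono (Set.subset_univ A)

theorem m_compl (A : Set X) : m.m Aᶜ = 1 - m.m A := by
  have h := m.fin_add A Aᶜ disjoint_compl_right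
  rw [Set.union_compl_self, m.total] at h
  linarith

theorem m_union_le (A B : Set X) : m.m (A ∪ B) ≤ m.m A + m.m B := by
  rw [← Set.union_sdiff_self, m.fin_add _ _ Set.disjoint_sdiff_right]
  linarith [m.m_mono (Set.sdiff_subset : B \ A ⊆ B)]

theorem m_biUnion_le {ι : Type*} (s : Finset ι) (A : ι → Set X) :
    m.m (⋃ i ∈ s, A i) ≤ ∑ i ∈ s, m.m (A i) := by
  classical
  induction s using Finset.induction_on with
  | empty => simp [m_empty]
  | insert a s ha ih =>
    rw [Finset.set_biUnion_insert, Finset.sum_insert ha]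
    linarith [m.m_union_le (A a) (⋃ i ∈ s, A i)]

theorem m_biUnion_of_pairwiseDisjoint {ι : Type*} (s : Finset ι) (A : ι → Set X)
    (hA : (s : Set ι).PairwiseDisjoint A) : m.m (⋃ i ∈ s, A i) = ∑ i ∈ s, m.m (A i) := by
  classical
  induction s using Finset.induction_on with
  | empty => simp [m_empty]
  | insert a s ha ih =>
    rw [Finset.coe_insert, Set.pairwiseDisjoint_insert] at hA
    rw [Finset.set_biUnion_insert, Finset.sum_insert ha, ← ih hA.1, m.fin_add]
    exact Set.disjoint_iUnion₂_right.2 fun i hi => hA.2 i hi (ne_of_mem_of_not_mem hi ha).symm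

/-- The layer-cake integral of `φ`, meaningful for bounded `φ` (otherwise `∑ᶠ` may silently be
`0`). -/
noncomputable def natIntegral (φ : X → ℕ) : ℝ := ∑ᶠ i : ℕ, m.m {x | i < φ x}

theorem natIntegral_eq_sum {φ : X → ℕ} {N : ℕ} (hφ : ∀ x, φ x ≤ N) :
    m.natIntegral φ = ∑ i ∈ range N, m.m {x | i < φ x} := by
  refine finsum_eq_sum_of_support_subset _ fun i hi => ?_
  by_contra hiN
  have hempty : {x | i < φ x} = ∅ :=
    Set.eq_empty_of_forall_notMem fun x hx => hiN (by simpa using hx.trans_le (hφ x))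
  exact hi (by simp only [hempty, m_empty])

theorem natIntegral_mono {φ ψ : X → ℕ} {N : ℕ} (hψ : ∀ x, ψ x ≤ N) (h : ∀ x, φ x ≤ ψ x) :
    m.natIntegral φ ≤ m.natIntegral ψ := by
  rw [m.natIntegral_eq_sum fun x => (h x).trans (hψ x), m.natIntegral_eq_sum hψ]
  exact sum_le_sum fun i _ => m.m_mono fun x hx => lt_of_lt_of_le hx (h x)

theorem natIntegral_const (k : ℕ) : m.natIntegral (fun _ => k) = k := by
  rw [m.natIntegral_eq_sum fun _ => le_rfl, sum_congr rfl fun i hi => by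
    rw [show {x : X | i < k} = Set.univ from Set.eq_univ_of_forall fun _ => mem_range.1 hi,
      m.total]]
  simp

theorem natIntegral_comp (T : X → X) (hT : ∀ A, m.m (T ⁻¹' A) = m.m A) (φ : X → ℕ) :
    m.natIntegral (φ ∘ T) = m.natIntegral φ :=
  finsum_congr fun i => hT {x | i < φ x}

theorem natIntegral_add_indicator {φ : X → ℕ} {N : ℕ} (hφ : ∀ x, φ x ≤ N) (A : Set X) :
    m.natIntegral (fun x => φ x + A.indicator 1 x) = m.natIntegral φ + m.m A := by
  have hlevel : ∀ i : ℕ, m.m {x | i < (φ x + A.indicator 1 x)}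
      = m.m {x | i < φ x} + m.m (A ∩ {x | φ x = i}) := by
    intro i
    rw [← m.fin_add]
    · congr 1
      ext x
      by_cases hx : x ∈ A <;> simp [hx]; omega
    · exact Set.disjoint_left.2 fun x h1 h2 => by simp_all
  have hfibres : ∑ i ∈ range (N + 1), m.m (A ∩ {x | φ x = i}) = m.m A := by
    rw [← m.m_biUnion_of_pairwiseDisjoint]
    · congr 1
      ext x
      simpa using fun _ => Nat.lt_succ_of_le (hφ x)
    · exact fun i _ j _ hij => Set.disjoint_left.2 fun x h1 h2 => hij (h1.2.symm.trans h2.2)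
  have hbound : ∀ x, φ x + A.indicator 1 x ≤ N + 1 := fun x =>
    add_le_add (hφ x) (Set.indicator_apply_le' (fun _ => le_rfl) fun _ => zero_le_one)
  rw [m.natIntegral_eq_sum hbound, m.natIntegral_eq_sum fun x => (hφ x).trans N.le_succ,
    sum_congr rfl fun i _ => hlevel i, sum_add_distrib, hfibres]

theorem natIntegral_add {φ ψ : X → ℕ} {N M : ℕ} (hφ : ∀ x, φ x ≤ N) (hψ : ∀ x, ψ x ≤ M) :
    m.natIntegral (fun x => φ x + ψ x) = m.natIntegral φ + m.natIntegral ψ := by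
  induction M generalizing ψ with
  | zero =>
    obtain rfl : ψ = fun _ => 0 := funext fun x => Nat.le_zero.1 (hψ x)
    simp [m.natIntegral_const]
  | succ M ih =>
    set A := {x | M < ψ x}
    have hsplit : ∀ x, ψ x = min (ψ x) M + A.indicator 1 x := fun x => by
      have := hψ x
      by_cases hx : M < ψ x <;> simp [A, hx] <;> omega
    have hmin : ∀ x, min (ψ x) M ≤ M := fun x => min_le_right _ _
    calc m.natIntegral (fun x => φ x + ψ x)
        = m.natIntegral (fun x => (φ x + min (ψ x) M) + A.indicator 1 x) := by
          congr 1; funext x; have := hsplit x; omega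
      _ = m.natIntegral φ + (m.natIntegral (fun x => min (ψ x) M) + m.m A) := by
          rw [m.natIntegral_add_indicator fun x => add_le_add (hφ x) (hmin x), ih hmin, add_assoc]
      _ = m.natIntegral φ + m.natIntegral ψ := by
          rw [← m.natIntegral_add_indicator hmin]
          congr 2; funext x; exact (hsplit x).symm

theorem natIntegral_const_mul {φ : X → ℕ} {N : ℕ} (hφ : ∀ x, φ x ≤ N) (k : ℕ) :
    m.natIntegral (fun x => k * φ x) = k * m.natIntegral φ := by
  induction k with
  | zero => simpa using m.natIntegral_const 0
  | succ k ih =>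
    simp_rw [Nat.succ_mul]
    rw [m.natIntegral_add (N := k * N) (fun x => Nat.mul_le_mul_left k (hφ x)) hφ, ih]
    push_cast; ring

/-- `(1/n) ∑_{i<n} m {f ≥ (i+1)/n}`, by the layer-cake formula. -/
noncomputable def lowerSum (n : ℕ) (f : X → ℝ) : ℝ := m.natIntegral (fun x => ⌊n * f x⌋₊) / n

/-- Meaningful for `[0, 1]`-valued `f`: there the lower sums along multiples of `n` increase and
stay within `1 / n` of the `n`-th one. -/
noncomputable def integral (f : X → ℝ) : ℝ := ⨆ n : ℕ, m.lowerSum (n + 1) f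

theorem floor_mul_le_of_le_one (hf₁ : f ≤ 1) (n : ℕ) (x : X) : ⌊n * f x⌋₊ ≤ n :=
  (Nat.floor_le_floor (mul_le_of_le_one_right n.cast_nonneg (hf₁ x))).trans
    (Nat.floor_natCast n).le

theorem lowerSum_nonneg (n : ℕ) (f : X → ℝ) : 0 ≤ m.lowerSum n f :=
  div_nonneg (finsum_nonneg fun _ => m.nonneg _) n.cast_nonneg

theorem lowerSum_le_one (hf₁ : f ≤ 1) (n : ℕ) : m.lowerSum n f ≤ 1 := by
  refine div_le_one_of_le₀ ?_ n.cast_nonneg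
  rw [m.natIntegral_eq_sum (floor_mul_le_of_le_one hf₁ n)]
  simpa using sum_le_sum fun i (_ : i ∈ range n) => m.m_le_one {x | i < ⌊n * f x⌋₊}

theorem lowerSum_le_lowerSum_mul (hf₀ : 0 ≤ f) (hf₁ : f ≤ 1) (k : ℕ) {n : ℕ} (hn : 0 < n) :
    m.lowerSum k f ≤ m.lowerSum (k * n) f := by
  rcases k.eq_zero_or_pos with rfl | hk
  · simp [lowerSum]
  have hpt : ∀ x, n * ⌊k * f x⌋₊ ≤ ⌊(k * n : ℕ) * f x⌋₊ := fun x => by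
    have := Nat.mul_floor_le_floor_mul (mul_nonneg k.cast_nonneg (hf₀ x)) n
    rwa [← mul_assoc, mul_comm (n : ℝ), ← Nat.cast_mul] at this
  have key := m.natIntegral_mono (floor_mul_le_of_le_one hf₁ (k * n)) hpt
  rw [m.natIntegral_const_mul (floor_mul_le_of_le_one hf₁ k)] at key
  unfold lowerSum
  rw [div_le_div_iff₀ (by positivity) (by positivity)]
  push_cast at key ⊢
  nlinarith [(Nat.cast_pos.2 hk : (0 : ℝ) < k)]

theorem lowerSum_mul_le_lowerSum_add (hf₀ : 0 ≤ f) (hf₁ : f ≤ 1) {k n : ℕ} (hk : 0 < k)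
    (hn : 0 < n) : m.lowerSum (k * n) f ≤ m.lowerSum n f + 1 / n := by
  have hpt : ∀ x, ⌊(k * n : ℕ) * f x⌋₊ ≤ k * ⌊n * f x⌋₊ + k := fun x => by
    have := Nat.floor_mul_le_mul_floor_add (mul_nonneg n.cast_nonneg (hf₀ x)) k
    rwa [← mul_assoc, ← Nat.cast_mul] at this
  have hb := floor_mul_le_of_le_one hf₁ n
  have key := m.natIntegral_mono (N := k * n + k)
    (fun x => Nat.add_le_add_right (Nat.mul_le_mul_left k (hb x)) k) hpt
  rw [m.natIntegral_add (N := k * n) (M := k) (fun x => Nat.mul_le_mul_left k (hb x))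
    (fun _ => le_rfl), m.natIntegral_const_mul hb, m.natIntegral_const] at key
  unfold lowerSum
  rw [div_add_div _ _ (by positivity) (by positivity),
    div_le_div_iff₀ (by positivity) (by positivity)]
  push_cast at key ⊢
  nlinarith [(Nat.cast_pos.2 hn : (0 : ℝ) < n)]

theorem lowerSum_le_integral (hf₁ : f ≤ 1) {n : ℕ} (hn : 0 < n) :
    m.lowerSum n f ≤ m.integral f := by
  obtain ⟨n, rfl⟩ := Nat.exists_eq_add_one.2 hn
  exact le_ciSup ⟨1, Set.forall_mem_range.2 fun k => m.lowerSum_le_one hf₁ (k + 1)⟩ n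

theorem integral_le_lowerSum_add (hf₀ : 0 ≤ f) (hf₁ : f ≤ 1) {n : ℕ} (hn : 0 < n) :
    m.integral f ≤ m.lowerSum n f + 1 / n :=
  ciSup_le fun k => (m.lowerSum_le_lowerSum_mul hf₀ hf₁ (k + 1) hn).trans
    (m.lowerSum_mul_le_lowerSum_add hf₀ hf₁ k.succ_pos hn)

theorem integral_nonneg (f : X → ℝ) : 0 ≤ m.integral f :=
  Real.iSup_nonneg fun n => m.lowerSum_nonneg (n + 1) f

theorem integral_one : m.integral 1 = 1 := by
  have h : ∀ n : ℕ, m.lowerSum (n + 1) 1 = 1 := fun n => by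
    have := m.natIntegral_const (n + 1)
    simp only [lowerSum, Pi.one_apply, mul_one, Nat.floor_natCast]
    push_cast at this ⊢
    rw [this, div_self (by positivity)]
  simp [integral, h]

theorem integral_comp (T : X → X) (hT : ∀ A, m.m (T ⁻¹' A) = m.m A) (f : X → ℝ) :
    m.integral (f ∘ T) = m.integral f := by
  simp only [integral, lowerSum]
  congr! 3 with n
  exact m.natIntegral_comp T hT fun x => ⌊((n + 1 : ℕ) : ℝ) * f x⌋₊

theorem lowerSum_add_mem_Icc (hf₀ : 0 ≤ f) (hg₀ : 0 ≤ g) (hfg : f + g ≤ 1) {n : ℕ}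
    (hn : 0 < n) : m.lowerSum n (f + g) ∈
      Set.Icc (m.lowerSum n f + m.lowerSum n g) (m.lowerSum n f + m.lowerSum n g + 1 / n) := by
  have hf := floor_mul_le_of_le_one (fun x => (le_add_of_nonneg_right (hg₀ x)).trans (hfg x)) n
  have hg := floor_mul_le_of_le_one (fun x => (le_add_of_nonneg_left (hf₀ x)).trans (hfg x)) n
  have hadd := m.natIntegral_add hf hg
  have hnf : ∀ x, 0 ≤ (n : ℝ) * f x := fun x => mul_nonneg n.cast_nonneg (hf₀ x)
  have hng : ∀ x, 0 ≤ (n : ℝ) * g x := fun x => mul_nonneg n.cast_nonneg (hg₀ x)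
  have hlow := m.natIntegral_mono (floor_mul_le_of_le_one hfg n) fun x => by
    simpa only [Pi.add_apply, mul_add] using Nat.floor_add_floor_le (hnf x) (hng x)
  have hup := m.natIntegral_mono (N := n + n + 1) (φ := fun x => ⌊n * (f + g) x⌋₊)
    (ψ := fun x => ⌊n * f x⌋₊ + ⌊n * g x⌋₊ + 1) (fun x => by have := hf x; have := hg x; omega)
    fun x => by
      simpa only [Pi.add_apply, mul_add] using
        Nat.floor_add_le_floor_add_floor_add_one (hnf x) (hng x)
  rw [m.natIntegral_add (N := n + n) (M := 1) (fun x => add_le_add (hf x) (hg x)) (fun _ => le_rfl),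
    m.natIntegral_const, hadd] at hup
  rw [hadd] at hlow
  simp only [lowerSum, ← add_div]
  have hn' : (0 : ℝ) < n := Nat.cast_pos.2 hn
  constructor
  · exact div_le_div_of_nonneg_right hlow hn'.le
  · rw [div_le_div_iff_of_pos_right hn']
    push_cast at hup
    exact hup

theorem integral_add (hf₀ : 0 ≤ f) (hg₀ : 0 ≤ g) (hfg : f + g ≤ 1) :
    m.integral (f + g) = m.integral f + m.integral g := by
  have hf₁ : f ≤ 1 := fun x => (le_add_of_nonneg_right (hg₀ x)).trans (hfg x)
  have hg₁ : g ≤ 1 := fun x => (le_add_of_nonneg_left (hf₀ x)).trans (hfg x)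
  have hfg₀ : 0 ≤ f + g := add_nonneg hf₀ hg₀
  have two_div (n : ℕ) : (2 : ℝ) / n = 1 / n + 1 / n := by ring
  refine le_antisymm (le_of_forall_le_add_div_nat (c := 2) fun n hn => ?_)
    (le_of_forall_le_add_div_nat (c := 2) fun n hn => ?_)
  · linarith [m.integral_le_lowerSum_add hfg₀ hfg hn, (m.lowerSum_add_mem_Icc hf₀ hg₀ hfg hn).2,
      m.lowerSum_le_integral hf₁ hn, m.lowerSum_le_integral hg₁ hn, two_div n]
  · linarith [m.integral_le_lowerSum_add hf₀ hf₁ hn, m.integral_le_lowerSum_add hg₀ hg₁ hn,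
      (m.lowerSum_add_mem_Icc hf₀ hg₀ hfg hn).1, m.lowerSum_le_integral hfg hn, two_div n]

end Mean

namespace Mean

variable {X Y : Type*}

def map (f : X → Y) (m : Mean X) : Mean Y where
  m A := m.m (f ⁻¹' A)
  nonneg _ := m.nonneg _
  total := m.total
  fin_add _ _ h := m.fin_add _ _ (h.preimage f)

noncomputable def cond (m : Mean X) (s : Set X) (hs : m.m s ≠ 0) : Mean s where
  m A := m.m (Subtype.val '' A) / m.m s
  nonneg _ := div_nonneg (m.nonneg _) (m.nonneg _)
  total := by rw [Set.image_univ, Subtype.range_coe, div_self hs]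
  fin_add A B h := by
    rw [Set.image_union, m.fin_add _ _ ((Set.disjoint_image_iff Subtype.val_injective).2 h),
      add_div]

noncomputable def bind (m : Mean X) (ν : X → Mean Y) : Mean Y where
  m A := m.integral fun x => (ν x).m A
  nonneg _ := m.integral_nonneg _
  total := by simp_rw [Mean.total]; exact m.integral_one
  fin_add A B h := by
    simp_rw [(ν _).fin_add A B h]
    exact m.integral_add (fun x => (ν x).nonneg A) (fun x => (ν x).nonneg B)
      fun x => show (ν x).m A + (ν x).m B ≤ 1 from (ν x).fin_add A B h ▸ (ν x).m_le_one _

end Mean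

section Invariance

variable {Γ X Y : Type*} [Group Γ] [MulAction Γ X] [MulAction Γ Y] {m : Mean X}

theorem meanInvariant_iff : MeanInvariant Γ m ↔ ∀ (γ : Γ) (A : Set X), m.m (γ • A) = m.m A := by
  simp only [MeanInvariant, Set.image_smul]

theorem MeanInvariant.bind (hm : MeanInvariant Γ m) {ν : X → Mean Y}
    (hν : ∀ (γ : Γ) (x : X) (A : Set Y), (ν (γ • x)).m (γ • A) = (ν x).m A) :
    MeanInvariant Γ (m.bind ν) := by
  refine meanInvariant_iff.2 fun γ A => ?_
  have hshift : (fun x => (ν x).m (γ • A)) = (fun x => (ν x).m A) ∘ (γ⁻¹ • ·) :=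
    funext fun x => by simpa using hν γ (γ⁻¹ • x) A
  change m.integral _ = m.integral _
  rw [hshift, m.integral_comp]
  intro S
  rw [Set.preimage_smul, inv_inv, meanInvariant_iff.1 hm]

theorem MeanInvariant.cond (hm : MeanInvariant Γ m) (p : SubMulAction Γ X) (hp : m.m p ≠ 0) :
    MeanInvariant Γ (m.cond p hp) := by
  intro γ A
  change m.m (Subtype.val '' _) / _ = m.m (Subtype.val '' A) / _
  rw [Set.image_image, ← hm γ (Subtype.val '' A), Set.image_image]
  rfl

end Invariance

theorem AmenableGroup.of_mulEquiv {G G' : Type*} [Group G] [Group G'] (e : G ≃* G')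
    (h : AmenableGroup G) : AmenableGroup G' := by
  obtain ⟨m, hm⟩ := h
  refine ⟨m.map e, fun g A => ?_⟩
  change m.m (e ⁻¹' _) = m.m (e ⁻¹' A)
  rw [← hm (e.symm g) (e ⁻¹' A)]
  congr 1
  ext x
  simp [Set.image_mul_left]

theorem AmenableGroup.amenableAction {K Y : Type*} [Group K] [MulAction K Y]
    (hK : AmenableGroup K) (y : Y) : AmenableAction K Y := by
  obtain ⟨μ, hμ⟩ := hK
  refine ⟨μ.map (· • y), fun k A => ?_⟩
  change μ.m (_ ⁻¹' _) = μ.m (_ ⁻¹' A)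
  rw [← hμ k ((· • y) ⁻¹' A)]
  congr 1
  ext z
  simp [Set.image_mul_left, Set.image_smul, Set.mem_smul_set_iff_inv_smul_mem, mul_smul]

section Stabilizers

variable {Γ X : Type*} [Group Γ] [MulAction Γ X]

/-- `ν x` translates a stabilizer-invariant mean at the representative of the orbit of `x` by an
element carrying the representative to `x`; stabilizer invariance makes it independent of
that element. -/
theorem exists_equivariant_means (h : ∀ x : X, AmenableGroup (stabilizer Γ x)) :
    ∃ ν : X → Mean Γ, ∀ (γ : Γ) (x : X) (A : Set Γ), (ν (γ • x)).m (γ • A) = (ν x).m A := by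
  let r : X → X := fun x => (Quotient.mk (orbitRel Γ X) x).out
  have hr : ∀ γ x, r (γ • x) = r x := fun γ x =>
    congrArg Quotient.out (Quotient.sound (mem_orbit x γ))
  choose t ht using fun x =>
    mem_orbit_symm.1 (orbitRel_apply.1 (Quotient.mk_out (s := orbitRel Γ X) x))
  choose μ hμ using fun x => (h x).amenableAction (1 : Γ)
  refine ⟨fun x => (μ (r x)).map (t x • ·), fun γ x A => ?_⟩
  set k : Γ := (t x)⁻¹ * γ⁻¹ * t (γ • x)
  have hk : k ∈ stabilizer Γ (r x) := by
    have hγx : t (γ • x) • r x = γ • x := hr γ x ▸ ht (γ • x)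
    rw [mem_stabilizer_iff, mul_smul, mul_smul, hγx, inv_smul_smul, inv_smul_eq_iff]
    exact (ht x).symm
  change (μ (r (γ • x))).m (_ ⁻¹' _) = (μ (r x)).m (_ ⁻¹' A)
  rw [hr, Set.preimage_smul, Set.preimage_smul, smul_smul,
    show (t (γ • x))⁻¹ * γ = k⁻¹ * (t x)⁻¹ by simp [k, mul_assoc], ← smul_smul]
  exact meanInvariant_iff.1 (hμ (r x)) ⟨k, hk⟩⁻¹ _

theorem AmenableGroup.of_amenableAction_of_amenableGroup_stabilizer (hX : AmenableAction Γ X)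
    (h : ∀ x : X, AmenableGroup (stabilizer Γ x)) : AmenableGroup Γ := by
  obtain ⟨m, hm⟩ := hX
  obtain ⟨ν, hν⟩ := exists_equivariant_means h
  exact ⟨m.bind ν, hm.bind hν⟩

theorem Mean.m_setOf_amenableGroup_stabilizer_eq_zero {m : Mean X} (hm : MeanInvariant Γ m)
    (hΓ : ¬ AmenableGroup Γ) : m.m {x | AmenableGroup (stabilizer Γ x)} = 0 := by
  let B : SubMulAction Γ X :=
    { carrier := {x | AmenableGroup (stabilizer Γ x)}
      smul_mem' := fun γ x hx => by
        change AmenableGroup _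
        rw [stabilizer_smul_eq_stabilizer_map_conj]
        exact hx.of_mulEquiv (Subgroup.equivMapOfInjective _ _ (MulAut.conj γ).injective) }
  by_contra hB
  refine hΓ (.of_amenableAction_of_amenableGroup_stabilizer ⟨m.cond B hB, hm.cond B hB⟩ fun x => ?_)
  rw [SubMulAction.stabilizer_of_subMul]
  exact x.2

end Stabilizers

theorem Mean.m_setOf_amenableGroup_inf_centralizer_eq_zero {G : Type*} [Group G] (m : Mean G)
    {L : Subgroup G} (hm : ∀ l ∈ L, ∀ A : Set G, m.m ((fun x => l * x * l⁻¹) '' A) = m.m A)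
    (hL : ¬ AmenableGroup L) : m.m {g | AmenableGroup ↥(L ⊓ Subgroup.centralizer {g})} = 0 := by
  let _ : MulAction L G := MulAction.compHom G (MulAut.conj.comp L.subtype)
  have hstab : ∀ g : G, stabilizer L g = (Subgroup.centralizer {g}).subgroupOf L := fun g => by
    ext l
    rw [Subgroup.mem_subgroupOf, Subgroup.mem_centralizer_singleton_iff, mem_stabilizer_iff]
    exact mul_inv_eq_iff_eq_mul
  have hset : {g | AmenableGroup ↥(L ⊓ Subgroup.centralizer {g})}
      = {g | AmenableGroup (stabilizer L g)} := Set.ext fun g => by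
    change AmenableGroup _ ↔ AmenableGroup _
    rw [hstab, ← Subgroup.inf_subgroupOf_left]
    exact ⟨.of_mulEquiv (Subgroup.subgroupOfEquivOfLe inf_le_left).symm,
      .of_mulEquiv (Subgroup.subgroupOfEquivOfLe inf_le_left)⟩
  rw [hset]
  exact m.m_setOf_amenableGroup_stabilizer_eq_zero (fun l A => hm l l.2 A) hL

theorem conull_nonamenable_centralizers_general {G : Type*} [Group G]
    (H : Subgroup G)
    (m : Mean G) (hm : ∀ h ∈ H, ∀ A : Set G, m.m ((fun x => h * x * h⁻¹) '' A) = m.m A)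
    (F : Finset (Subgroup G)) (hF : ∀ L ∈ F, L ≤ H ∧ ¬ AmenableGroup ↥L) :
    m.m {g : G | ∀ L ∈ F, ¬ AmenableGroup ↥(L ⊓ Subgroup.centralizer {g})} = 1 := by
  have hnull : ∀ L ∈ F, m.m {g | AmenableGroup ↥(L ⊓ Subgroup.centralizer {g})} = 0 :=
    fun L hL => m.m_setOf_amenableGroup_inf_centralizer_eq_zero
      (fun l hl => hm l ((hF L hL).1 hl)) (hF L hL).2
  have hcompl : {g : G | ∀ L ∈ F, ¬ AmenableGroup ↥(L ⊓ Subgroup.centralizer {g})}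
      = (⋃ L ∈ F, {g | AmenableGroup ↥(L ⊓ Subgroup.centralizer {g})})ᶜ := by
    ext g
    simp
  rw [hcompl, m.m_compl, sub_eq_self]
  exact le_antisymm ((m.m_biUnion_le F _).trans_eq (Finset.sum_eq_zero hnull)) (m.nonneg _)

/-- Lemma: if `(G,H)` is inner amenable and `m` is an `H`-conjugation invariant mean on
`G`, then for any finite collection `F` of nonamenable subgroups of `H`, `m`-almost every
`g ∈ G` has `L ∩ C_G(g)` nonamenable for all `L ∈ F`. -/
theorem conull_nonamenable_centralizers {G : Type*} [Group G] [Countable G]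
    (H : Subgroup G) (hpair : PairInnerAmenable H)
    (m : Mean G) (hm : ∀ h ∈ H, ∀ A : Set G, m.m ((fun x => h * x * h⁻¹) '' A) = m.m A)
    (F : Finset (Subgroup G)) (hF : ∀ L ∈ F, L ≤ H ∧ ¬ AmenableGroup ↥L) :
    m.m {g : G | ∀ L ∈ F, ¬ AmenableGroup ↥(L ⊓ Subgroup.centralizer {g})} = 1 :=
  conull_nonamenable_centralizers_general H m hm F hF
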